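/- arXiv:1306.0236 — 5 statements merged into one kernel-verified Lean document; each statement's English description precedes it below -/
import Mathlib

section
/- Let u(x,y) = cos y − cos x on ℝ². Define w(x,y) = ln[ (1 + tan²(x/2))(1 + tan²(y/2)) / (1 + |tan(x/2)||tan(y/2)|)² ] for (x,y) ∈ (−π,π)². Then σ := e^w is a positive continuous function on (−π,π)², and div(σ∇u) = 0 holds in (−π,π)² \ ({x=0} ∪ {y=0}) (where σ is C¹). -/
/-!
Write `a = x/2`, `b = y/2`. Since `1 + tan² = cos⁻²`, on `(-π, π)²` (where `cos a, cos b > 0`)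
`σ = (cos a cos b + |sin a sin b|)⁻²`. In each open quadrant the sign `ε = ±1` of `sin a sin b` is
constant, and there `σ = cos⁻² (a - ε b)`, so `σ ∇u = (sin x, -sin y) / cos² (a - ε b)`.
Its divergence, multiplied by `cos³ (a - ε b)`, is
`(cos x - cos y) cos (a - ε b) + (sin x + ε sin y) sin (a - ε b)`, which vanishes by the
sum-to-product formulas.
-/

open Real

/-- Partial derivative in x. -/
noncomputable def pdx (f : ℝ × ℝ → ℝ) (p : ℝ × ℝ) : ℝ := fderiv ℝ f p (1, 0)
/-- Partial derivative in y. -/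
noncomputable def pdy (f : ℝ × ℝ → ℝ) (p : ℝ × ℝ) : ℝ := fderiv ℝ f p (0, 1)

open Filter Topology

lemma pdx_eq_deriv {f : ℝ × ℝ → ℝ} {p : ℝ × ℝ} (hf : DifferentiableAt ℝ f p) :
    pdx f p = deriv (fun x => f (x, p.2)) p.1 :=
  (hf.hasFDerivAt.comp_hasDerivAt p.1
    ((hasDerivAt_id p.1).prodMk (hasDerivAt_const p.1 p.2))).deriv.symm

lemma pdy_eq_deriv {f : ℝ × ℝ → ℝ} {p : ℝ × ℝ} (hf : DifferentiableAt ℝ f p) :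
    pdy f p = deriv (fun y => f (p.1, y)) p.2 :=
  (hf.hasFDerivAt.comp_hasDerivAt p.2
    ((hasDerivAt_const p.2 p.1).prodMk (hasDerivAt_id p.2))).deriv.symm

lemma pdx_cos_sub_cos (p : ℝ × ℝ) : pdx (fun q => cos q.2 - cos q.1) p = sin p.1 := by
  rw [pdx_eq_deriv (by fun_prop)]
  simp

lemma pdy_cos_sub_cos (p : ℝ × ℝ) : pdy (fun q => cos q.2 - cos q.1) p = -sin p.2 := by
  rw [pdy_eq_deriv (by fun_prop)]
  simp

lemma cos_sub_cos_mul_cos_add_sin_add_sin_mul_sin (x y : ℝ) :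
    (cos x - cos y) * cos ((x - y) / 2) + (sin x + sin y) * sin ((x - y) / 2) = 0 := by
  rw [cos_sub_cos, sin_add_sin]
  ring

lemma cos_sub_cos_mul_cos_add_sin_add_sin_mul_sin_of_sign {ε : ℝ} (hε : ε = 1 ∨ ε = -1)
    (x y : ℝ) :
    (cos x - cos y) * cos (x / 2 - ε * (y / 2))
      + (sin x + ε * sin y) * sin (x / 2 - ε * (y / 2)) = 0 := by
  rcases hε with rfl | rfl
  · have h := cos_sub_cos_mul_cos_add_sin_add_sin_mul_sin x y
    rw [sub_div] at h
    simp only [one_mul]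
    exact h
  · have h := cos_sub_cos_mul_cos_add_sin_add_sin_mul_sin x (-y)
    rw [cos_neg, sin_neg, sub_neg_eq_add, add_div] at h
    simp only [neg_one_mul, sub_neg_eq_add]
    linear_combination h

lemma hasDerivAt_sin_div_cos_sq {θ : ℝ → ℝ} {θ' t : ℝ} (hθ : HasDerivAt θ θ' t)
    (ht : cos (θ t) ≠ 0) :
    HasDerivAt (fun t => sin t / cos (θ t) ^ 2)
      (cos t / cos (θ t) ^ 2 + 2 * θ' * sin t * sin (θ t) / cos (θ t) ^ 3) t :=
  ((hasDerivAt_sin t).fun_div (hθ.cos.fun_pow 2) (pow_ne_zero 2 ht)).congr_deriv (by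
    field_simp
    ring)

theorem pdx_add_pdy_sin_div_cos_sq_eq_zero {ε : ℝ} (hε : ε = 1 ∨ ε = -1) {p : ℝ × ℝ}
    (hp : cos (p.1 / 2 - ε * (p.2 / 2)) ≠ 0) :
    pdx (fun q => sin q.1 / cos (q.1 / 2 - ε * (q.2 / 2)) ^ 2) p
      + pdy (fun q => -sin q.2 / cos (q.1 / 2 - ε * (q.2 / 2)) ^ 2) p = 0 := by
  rw [pdx_eq_deriv (by fun_prop (disch := exact pow_ne_zero 2 hp)),
    pdy_eq_deriv (by fun_prop (disch := exact pow_ne_zero 2 hp))]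
  dsimp only
  have hθx : HasDerivAt (fun x => x / 2 - ε * (p.2 / 2)) (1 / 2) p.1 := by
    simpa using ((hasDerivAt_id p.1).div_const 2).sub_const (ε * (p.2 / 2))
  have hθy : HasDerivAt (fun y => p.1 / 2 - ε * (y / 2)) (-(ε * (1 / 2))) p.2 :=
    (((hasDerivAt_id p.2).div_const 2).const_mul ε).const_sub (p.1 / 2)
  simp only [neg_div]
  rw [(hasDerivAt_sin_div_cos_sq hθx hp).deriv, deriv.fun_neg,
    (hasDerivAt_sin_div_cos_sq hθy hp).deriv]
  have key := cos_sub_cos_mul_cos_add_sin_add_sin_mul_sin_of_sign hε p.1 p.2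
  -- keeps `field_simp` from normalising the arguments of `cos` and `sin`
  generalize cos (p.1 / 2 - ε * (p.2 / 2)) = c at hp key ⊢
  generalize sin (p.1 / 2 - ε * (p.2 / 2)) = s at key ⊢
  field_simp
  linear_combination key

lemma one_add_tan_sq_mul_one_add_tan_sq_div {a b : ℝ} (ha : 0 < cos a) (hb : 0 < cos b) :
    (1 + tan a ^ 2) * (1 + tan b ^ 2) / (1 + |tan a| * |tan b|) ^ 2
      = ((cos a * cos b + |sin a * sin b|) ^ 2)⁻¹ := by
  rw [tan_eq_sin_div_cos, tan_eq_sin_div_cos, abs_div, abs_div, abs_of_pos ha, abs_of_pos hb,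
    abs_mul]
  field_simp
  rw [cos_sq_add_sin_sq, cos_sq_add_sin_sq, one_mul]

lemma cos_mul_cos_add_abs_sin_mul_sin {ε a b : ℝ} (hε : ε = 1 ∨ ε = -1)
    (h : 0 < ε * (sin a * sin b)) : cos a * cos b + |sin a * sin b| = cos (a - ε * b) := by
  rcases hε with rfl | rfl
  · rw [one_mul] at h
    rw [abs_of_pos h, one_mul, cos_sub]
  · rw [abs_of_neg (by linarith), neg_one_mul, sub_neg_eq_add, cos_add]
    ring

lemma cos_half_pos {x : ℝ} (hx : x ∈ Set.Ioo (-π) π) : 0 < cos (x / 2) :=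
  cos_pos_of_mem_Ioo ⟨by linarith [hx.1], by linarith [hx.2]⟩

lemma sin_half_ne_zero {x : ℝ} (hx : x ∈ Set.Ioo (-π) π) (h0 : x ≠ 0) : sin (x / 2) ≠ 0 := by
  rw [Ne, sin_eq_zero_iff_of_lt_of_lt (by linarith [hx.1, pi_pos]) (by linarith [hx.2, pi_pos])]
  contrapose! h0
  linarith

/-- for u(x,y) = cos y − cos x and the explicit w, σ := e^w is positive and
continuous on (−π,π)², and div(σ∇u) = 0 away from the axes. -/
theorem stmt2 :
    let u : ℝ × ℝ → ℝ := fun p => Real.cos p.2 - Real.cos p.1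
    let w : ℝ × ℝ → ℝ := fun p =>
      Real.log ((1 + Real.tan (p.1 / 2) ^ 2) * (1 + Real.tan (p.2 / 2) ^ 2) /
        (1 + |Real.tan (p.1 / 2)| * |Real.tan (p.2 / 2)|) ^ 2)
    let σ : ℝ × ℝ → ℝ := fun p => Real.exp (w p)
    let S : Set (ℝ × ℝ) := Set.Ioo (-π) π ×ˢ Set.Ioo (-π) π
    (∀ p ∈ S, 0 < σ p) ∧ ContinuousOn σ S ∧
    (∀ p ∈ S, p.1 ≠ 0 → p.2 ≠ 0 →
      pdx (fun q => σ q * pdx u q) p + pdy (fun q => σ q * pdy u q) p = 0) := by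
  intro u w σ S
  have hσ : ∀ p ∈ S,
      σ p = ((cos (p.1 / 2) * cos (p.2 / 2) + |sin (p.1 / 2) * sin (p.2 / 2)|) ^ 2)⁻¹ := by
    rintro p ⟨hx, hy⟩
    rw [← one_add_tan_sq_mul_one_add_tan_sq_div (cos_half_pos hx) (cos_half_pos hy)]
    exact exp_log (by positivity)
  refine ⟨fun p _ => exp_pos _, ?_, ?_⟩
  · refine ContinuousOn.congr (ContinuousOn.inv₀ (by fun_prop) fun p ⟨hx, hy⟩ => ?_) hσ
    have := cos_half_pos hx
    have := cos_half_pos hy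
    positivity
  · intro p hp hx hy
    obtain ⟨ε, hε, hpε⟩ :
        ∃ ε : ℝ, (ε = 1 ∨ ε = -1) ∧ 0 < ε * (sin (p.1 / 2) * sin (p.2 / 2)) := by
      rcases (mul_ne_zero (sin_half_ne_zero hp.1 hx) (sin_half_ne_zero hp.2 hy)).lt_or_gt
        with h | h
      · exact ⟨-1, Or.inr rfl, by linarith⟩
      · exact ⟨1, Or.inl rfl, by linarith⟩
    have hσ_near : ∀ᶠ q in 𝓝 p, σ q = (cos (q.1 / 2 - ε * (q.2 / 2)) ^ 2)⁻¹ := by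
      have hsign : ∀ᶠ q in 𝓝 p, 0 < ε * (sin (q.1 / 2) * sin (q.2 / 2)) :=
        (by fun_prop : Continuous fun q : ℝ × ℝ => ε * (sin (q.1 / 2) * sin (q.2 / 2)))
          |>.continuousAt.eventually_const_lt hpε
      filter_upwards [(isOpen_Ioo.prod isOpen_Ioo).mem_nhds hp, hsign] with q hq hq'
      rw [hσ q hq, cos_mul_cos_add_abs_sin_mul_sin hε hq']
    have hflux_x : (fun q => σ q * pdx u q) =ᶠ[𝓝 p]
        fun q => sin q.1 / cos (q.1 / 2 - ε * (q.2 / 2)) ^ 2 :=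
      hσ_near.mono fun q hq => by beta_reduce; rw [hq, pdx_cos_sub_cos, inv_mul_eq_div]
    have hflux_y : (fun q => σ q * pdy u q) =ᶠ[𝓝 p]
        fun q => -sin q.2 / cos (q.1 / 2 - ε * (q.2 / 2)) ^ 2 :=
      hσ_near.mono fun q hq => by beta_reduce; rw [hq, pdy_cos_sub_cos, inv_mul_eq_div]
    have hcos : cos (p.1 / 2 - ε * (p.2 / 2)) ≠ 0 := by
      rw [← cos_mul_cos_add_abs_sin_mul_sin hε hpε]
      have := cos_half_pos hp.1
      have := cos_half_pos hp.2
      positivity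
    rw [pdx, pdy, hflux_x.fderiv_eq, hflux_y.fderiv_eq]
    exact pdx_add_pdy_sin_div_cos_sq_eq_zero hε hcos
end

section
/- Let u(x,y) = (y³ − x³)/3 and Ω = (0,1)². Then σ₀(x,y) := 16 x² y² / (x+y)⁴ is a positive C¹ function on Ω, bounded above by 16, and satisfies div(σ₀ ∇u) = 0 in Ω. -/
section PartialDerivatives

variable {f : ℝ × ℝ → ℝ} {p : ℝ × ℝ} {a : ℝ}

theorem pdx_eq_of_hasDerivAt (hf : DifferentiableAt ℝ f p)
    (h : HasDerivAt (fun x => f (x, p.2)) a p.1) : pdx f p = a :=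
  (hf.hasFDerivAt.comp_hasDerivAt p.1
    ((hasDerivAt_id p.1).prodMk (hasDerivAt_const p.1 p.2))).unique h

theorem pdy_eq_of_hasDerivAt (hf : DifferentiableAt ℝ f p)
    (h : HasDerivAt (fun y => f (p.1, y)) a p.2) : pdy f p = a :=
  (hf.hasFDerivAt.comp_hasDerivAt p.2
    ((hasDerivAt_const p.2 p.1).prodMk (hasDerivAt_id p.2))).unique h

end PartialDerivatives

noncomputable def potential (p : ℝ × ℝ) : ℝ := (p.2 ^ 3 - p.1 ^ 3) / 3

noncomputable def conductivity (p : ℝ × ℝ) : ℝ := 16 * p.1 ^ 2 * p.2 ^ 2 / (p.1 + p.2) ^ 4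

theorem conductivity_le_one {p : ℝ × ℝ} (hp : 0 ≤ p.1 * p.2) : conductivity p ≤ 1 := by
  have amgm : 4 * (p.1 * p.2) ≤ (p.1 + p.2) ^ 2 := by nlinarith [sq_nonneg (p.1 - p.2)]
  have hnum : 16 * p.1 ^ 2 * p.2 ^ 2 ≤ (p.1 + p.2) ^ 4 :=
    calc 16 * p.1 ^ 2 * p.2 ^ 2 = (4 * (p.1 * p.2)) ^ 2 := by ring
      _ ≤ ((p.1 + p.2) ^ 2) ^ 2 := pow_le_pow_left₀ (by positivity) amgm 2
      _ = (p.1 + p.2) ^ 4 := by ring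
  exact div_le_one_of_le₀ hnum (by positivity)

theorem contDiffOn_conductivity {n : WithTop ℕ∞} :
    ContDiffOn ℝ n conductivity {p | p.1 + p.2 ≠ 0} :=
  ContDiffOn.div (by fun_prop) (by fun_prop) fun _ hp => pow_ne_zero 4 hp

theorem pdx_potential (p : ℝ × ℝ) : pdx potential p = -p.1 ^ 2 :=
  pdx_eq_of_hasDerivAt (by unfold potential; fun_prop)
    ((((hasDerivAt_pow 3 p.1).const_sub (p.2 ^ 3)).div_const 3).congr_deriv (by ring))

theorem pdy_potential (p : ℝ × ℝ) : pdy potential p = p.2 ^ 2 :=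
  pdy_eq_of_hasDerivAt (by unfold potential; fun_prop)
    ((((hasDerivAt_pow 3 p.2).sub_const (p.1 ^ 3)).div_const 3).congr_deriv (by ring))

theorem hasDerivAt_mul_div_add_pow_four {s t : ℝ} (h : s + t ≠ 0) :
    HasDerivAt (fun s => 16 * t ^ 2 * (s / (s + t)) ^ 4) (64 * s ^ 3 * t ^ 3 / (s + t) ^ 5) s := by
  have hquot := (hasDerivAt_id' s).fun_div ((hasDerivAt_id' s).add_const t) h
  refine ((hquot.fun_pow 4).const_mul (16 * t ^ 2)).congr_deriv ?_
  simp only [Nat.cast_ofNat, Nat.add_one_sub_one]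
  field_simp
  ring

theorem pdx_flux {p : ℝ × ℝ} (hp : p.1 + p.2 ≠ 0) :
    pdx (fun q => conductivity q * pdx potential q) p =
      -(64 * p.1 ^ 3 * p.2 ^ 3 / (p.1 + p.2) ^ 5) := by
  have hflux : (fun q => conductivity q * pdx potential q) =
      fun q => -(16 * q.2 ^ 2 * (q.1 / (q.1 + q.2)) ^ 4) := by
    funext q
    rw [pdx_potential, conductivity, div_pow]
    ring
  rw [hflux]
  exact pdx_eq_of_hasDerivAt (by fun_prop (disch := exact hp))
    (hasDerivAt_mul_div_add_pow_four hp).neg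

theorem pdy_flux {p : ℝ × ℝ} (hp : p.1 + p.2 ≠ 0) :
    pdy (fun q => conductivity q * pdy potential q) p =
      64 * p.1 ^ 3 * p.2 ^ 3 / (p.1 + p.2) ^ 5 := by
  have hflux : (fun q => conductivity q * pdy potential q) =
      fun q => 16 * q.1 ^ 2 * (q.2 / (q.2 + q.1)) ^ 4 := by
    funext q
    rw [pdy_potential, conductivity, div_pow]
    ring
  have hp' : p.2 + p.1 ≠ 0 := by rwa [add_comm]
  rw [hflux]
  exact pdy_eq_of_hasDerivAt (by fun_prop (disch := exact hp'))
    ((hasDerivAt_mul_div_add_pow_four hp').congr_deriv (by ring))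

theorem pdx_add_pdy_conductivity_mul_potential {p : ℝ × ℝ} (hp : p.1 + p.2 ≠ 0) :
    pdx (fun q => conductivity q * pdx potential q) p +
      pdy (fun q => conductivity q * pdy potential q) p = 0 := by
  rw [pdx_flux hp, pdy_flux hp, neg_add_cancel]

/-- for u(x,y) = (y³−x³)/3 on Ω = (0,1)², the conductivity
σ₀(x,y) = 16x²y²/(x+y)⁴ is positive, bounded by 16, C¹ on Ω and div(σ₀∇u) = 0 in Ω. -/
theorem stmt5 :
    let u : ℝ × ℝ → ℝ := fun p => (p.2 ^ 3 - p.1 ^ 3) / 3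
    let σ₀ : ℝ × ℝ → ℝ := fun p => 16 * p.1 ^ 2 * p.2 ^ 2 / (p.1 + p.2) ^ 4
    let Ω : Set (ℝ × ℝ) := Set.Ioo (0:ℝ) 1 ×ˢ Set.Ioo (0:ℝ) 1
    (∀ p ∈ Ω, 0 < σ₀ p ∧ σ₀ p ≤ 16) ∧ ContDiffOn ℝ 1 σ₀ Ω ∧
    (∀ p ∈ Ω, pdx (fun q => σ₀ q * pdx u q) p + pdy (fun q => σ₀ q * pdy u q) p = 0) := by
  intro u σ₀ Ω
  have hΩ : Ω ⊆ {p | p.1 + p.2 ≠ 0} := fun p ⟨⟨hx, _⟩, ⟨hy, _⟩⟩ => (add_pos hx hy).ne'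
  refine ⟨fun p ⟨⟨hx, _⟩, ⟨hy, _⟩⟩ => ⟨by positivity, ?_⟩, contDiffOn_conductivity.mono hΩ,
    fun p hp => pdx_add_pdy_conductivity_mul_potential (hΩ hp)⟩
  exact (conductivity_le_one (mul_pos hx hy).le).trans (by norm_num)
end

section
/- Let u₁,…,u_d : ℝ → ℝ be C² with each u_i' periodic and nowhere vanishing, and define u(x) = Σᵢ u_i(x_i) on ℝ^d. Then the conductivity σ(x) := |∏ᵢ u_i'(x_i)|⁻¹ is a positive, periodic, C¹ function on ℝ^d, bounded above and below by positive constants, and satisfies div(σ∇u) = 0 in ℝ^d. -/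
/-!
Since `∂ᵢu = uᵢ'(xᵢ)`, the `i`-th component of `σ∇u` is
`(|uᵢ'(xᵢ)|⁻¹ uᵢ'(xᵢ)) · |∏_{j ≠ i} uⱼ'(xⱼ)|⁻¹`. The first factor is a constant sign, because
`uᵢ'` is continuous and never vanishes, and the second does not depend on `xᵢ`; so the component
is constant along the `i`-th coordinate lines and its `xᵢ`-derivative vanishes. Each `|uᵢ'|` is
continuous and periodic, hence has compact range avoiding `0`, which bounds `σ` above and below.
-/

open Finset

theorem abs_inv_mul_self_eq_of_continuous {f : ℝ → ℝ} (hf : Continuous f) (h0 : ∀ t, f t ≠ 0)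
    (s t : ℝ) : |f s|⁻¹ * f s = |f t|⁻¹ * f t := by
  rcases isPreconnected_univ.eq_or_eq_neg_of_sq_eq hf.continuousOn hf.abs.continuousOn
    (fun r _ => (sq_abs (f r)).symm) (fun {r} _ => abs_ne_zero.2 (h0 r)) with h | h <;>
  · rw [h (Set.mem_univ s), h (Set.mem_univ t)]
    simp [abs_ne_zero.2 (h0 s), abs_ne_zero.2 (h0 t)]

theorem Function.Periodic.exists_pos_le_abs_le {f : ℝ → ℝ} {T : ℝ} (hp : Function.Periodic f T)
    (hT : T ≠ 0) (hf : Continuous f) (h0 : ∀ t, f t ≠ 0) :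
    ∃ m M : ℝ, 0 < m ∧ ∀ t, m ≤ |f t| ∧ |f t| ≤ M := by
  have hK := (hp.comp abs).compact_of_continuous hT hf.abs
  obtain ⟨_, ⟨t₀, rfl⟩, hmin⟩ := hK.exists_isLeast (Set.range_nonempty _)
  obtain ⟨M, hM⟩ := hK.bddAbove
  exact ⟨|f t₀|, M, abs_pos.2 (h0 t₀), fun t => ⟨hmin ⟨t, rfl⟩, hM ⟨t, rfl⟩⟩⟩

theorem fderiv_apply_eq_zero_of_forall_add_smul_eq {E F : Type*} [NormedAddCommGroup E]
    [NormedSpace ℝ E] [NormedAddCommGroup F] [NormedSpace ℝ F] {g : E → F} {x v : E}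
    (h : ∀ t : ℝ, g (x + t • v) = g x) : fderiv ℝ g x v = 0 := by
  by_cases hg : DifferentiableAt ℝ g x
  · rw [← hg.lineDeriv_eq_fderiv, lineDeriv]
    simp [h]
  · simp [fderiv_zero_of_not_differentiableAt hg]

section Coordinatewise

variable {ι : Type*} [Fintype ι]

theorem exists_pos_le_abs_prod_inv_le {f : ι → ℝ → ℝ}
    (hb : ∀ i, ∃ m M : ℝ, 0 < m ∧ ∀ s, m ≤ |f i s| ∧ |f i s| ≤ M) :
    ∃ c C : ℝ, 0 < c ∧ ∀ y : ι → ℝ, c ≤ |∏ i, f i (y i)|⁻¹ ∧ |∏ i, f i (y i)|⁻¹ ≤ C := by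
  choose m M hm hmM using hb
  have hmM' : ∀ i, 0 < M i := fun i => (hm i).trans_le ((hmM i 0).1.trans (hmM i 0).2)
  refine ⟨(∏ i, M i)⁻¹, (∏ i, m i)⁻¹, inv_pos.2 (prod_pos fun i _ => hmM' i), fun y => ?_⟩
  have hlow : ∏ i, m i ≤ ∏ i, |f i (y i)| :=
    prod_le_prod (fun i _ => (hm i).le) fun i _ => (hmM i (y i)).1
  have hup : ∏ i, |f i (y i)| ≤ ∏ i, M i :=
    prod_le_prod (fun i _ => abs_nonneg _) fun i _ => (hmM i (y i)).2
  have hpos : 0 < ∏ i, m i := prod_pos fun i _ => hm i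
  rw [abs_prod]
  exact ⟨inv_anti₀ (hpos.trans_le hlow) hup, inv_anti₀ hpos hlow⟩

theorem contDiff_abs_prod_apply_inv {n : ℕ∞} {f : ι → ℝ → ℝ}
    (hf : ∀ i, ContDiff ℝ n (f i)) (h0 : ∀ i s, f i s ≠ 0) :
    ContDiff ℝ n (fun x : EuclideanSpace ℝ ι => |∏ i, f i (x i)|⁻¹) := by
  have hprod : ContDiff ℝ n (fun x : EuclideanSpace ℝ ι => ∏ i, f i (x i)) :=
    contDiff_prod fun i _ => (hf i).comp (EuclideanSpace.proj (𝕜 := ℝ) (ι := ι) i).contDiff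
  have hne : ∀ x : EuclideanSpace ℝ ι, ∏ i, f i (x i) ≠ 0 :=
    fun x => prod_ne_zero_iff.2 fun i _ => h0 i (x i)
  exact contDiff_iff_contDiffAt.2 fun x =>
    (hprod.contDiffAt.abs (hne x)).inv (abs_ne_zero.2 (hne x))

variable [DecidableEq ι]

theorem fderiv_sum_apply_single {g : ι → ℝ → ℝ} {x : EuclideanSpace ℝ ι}
    (hg : ∀ i, DifferentiableAt ℝ (g i) (x i)) (i : ι) :
    fderiv ℝ (fun y : EuclideanSpace ℝ ι => ∑ j, g j (y j)) x (EuclideanSpace.single i 1) =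
      deriv (g i) (x i) := by
  have hcoord : ∀ j, HasFDerivAt (fun y : EuclideanSpace ℝ ι => g j (y j))
      (deriv (g j) (x j) • EuclideanSpace.proj j) x := fun j =>
    (hg j).hasDerivAt.comp_hasFDerivAt x
      (EuclideanSpace.proj j : EuclideanSpace ℝ ι →L[ℝ] ℝ).hasFDerivAt
  have hsum := HasFDerivAt.fun_sum (u := univ) fun j _ => hcoord j
  simp [hsum.fderiv]

theorem prod_erase_apply_add_single (f : ι → ℝ → ℝ) (x : EuclideanSpace ℝ ι) (i : ι) (c : ℝ) :
    ∏ j ∈ univ.erase i, f j ((x + EuclideanSpace.single i c) j) =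
      ∏ j ∈ univ.erase i, f j (x j) :=
  prod_congr rfl fun j hj => by simp [ne_of_mem_erase hj]

theorem prod_apply_add_single_of_periodic {f : ι → ℝ → ℝ} {i : ι} {c : ℝ}
    (hp : Function.Periodic (f i) c) (x : EuclideanSpace ℝ ι) :
    ∏ j, f j ((x + EuclideanSpace.single i c) j) = ∏ j, f j (x j) := by
  rw [← mul_prod_erase _ _ (mem_univ i), ← mul_prod_erase _ _ (mem_univ i),
    prod_erase_apply_add_single]
  simp [hp (x i)]

theorem abs_prod_inv_mul_apply_add_single {f : ι → ℝ → ℝ} {i : ι} (hf : Continuous (f i))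
    (h0 : ∀ s, f i s ≠ 0) (x : EuclideanSpace ℝ ι) (c : ℝ) :
    |∏ j, f j ((x + EuclideanSpace.single i c) j)|⁻¹ * f i ((x + EuclideanSpace.single i c) i) =
      |∏ j, f j (x j)|⁻¹ * f i (x i) := by
  simp_rw [← mul_prod_erase _ _ (mem_univ i), prod_erase_apply_add_single, abs_mul, mul_inv,
    mul_right_comm _ _ (f i _)]
  rw [abs_inv_mul_self_eq_of_continuous hf h0 _ (x i)]

theorem sum_fderiv_abs_prod_inv_mul_apply_single {f : ι → ℝ → ℝ} (hf : ∀ i, Continuous (f i))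
    (h0 : ∀ i s, f i s ≠ 0) (x : EuclideanSpace ℝ ι) :
    ∑ i, fderiv ℝ (fun y : EuclideanSpace ℝ ι => |∏ j, f j (y j)|⁻¹ * f i (y i)) x
      (EuclideanSpace.single i 1) = 0 :=
  sum_eq_zero fun i _ => fderiv_apply_eq_zero_of_forall_add_smul_eq fun t => by
    rw [show t • EuclideanSpace.single i (1 : ℝ) = EuclideanSpace.single i t by
      ext j; simp [PiLp.single_apply]]
    exact abs_prod_inv_mul_apply_add_single (hf i) (h0 i) x t

end Coordinatewise

/-- for u(x) = Σᵢ uᵢ(xᵢ) with each uᵢ' periodic and nowhere vanishing,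
σ(x) = |∏ᵢ uᵢ'(xᵢ)|⁻¹ is a positive, periodic, C¹ conductivity, bounded above and below
by positive constants, with div(σ∇u) = 0 in ℝ^d. -/
theorem stmt11 {d : ℕ} (u : Fin d → ℝ → ℝ) (T : Fin d → ℝ)
    (hu : ∀ i, ContDiff ℝ 2 (u i)) (hT : ∀ i, 0 < T i)
    (hper : ∀ i, Function.Periodic (deriv (u i)) (T i))
    (hne : ∀ i s, deriv (u i) s ≠ 0) :
    let U : EuclideanSpace ℝ (Fin d) → ℝ := fun x => ∑ i, u i (x i)
    let σ : EuclideanSpace ℝ (Fin d) → ℝ := fun x => |∏ i, deriv (u i) (x i)|⁻¹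
    (∀ x, 0 < σ x) ∧
    (∀ (i : Fin d) (x : EuclideanSpace ℝ (Fin d)),
      σ (x + EuclideanSpace.single i (T i)) = σ x) ∧
    ContDiff ℝ 1 σ ∧
    (∃ c C : ℝ, 0 < c ∧ ∀ x, c ≤ σ x ∧ σ x ≤ C) ∧
    (∀ x, (∑ i, fderiv ℝ
        (fun y => σ y * fderiv ℝ U y (EuclideanSpace.single i 1)) x
        (EuclideanSpace.single i 1)) = 0) := by
  intro U σ
  have hu' : ∀ i, ContDiff ℝ 1 (deriv (u i)) := fun i => (hu i).deriv'
  have hU : ∀ i y, fderiv ℝ U y (EuclideanSpace.single i 1) = deriv (u i) (y i) :=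
    fun i y => fderiv_sum_apply_single (fun j => (hu j).differentiable two_ne_zero _) i
  obtain ⟨c, C, hc, hcC⟩ := exists_pos_le_abs_prod_inv_le fun i =>
    (hper i).exists_pos_le_abs_le (hT i).ne' (hu' i).continuous (hne i)
  refine ⟨fun x => hc.trans_le (hcC x).1, fun i x => ?_, contDiff_abs_prod_apply_inv hu' hne,
    ⟨c, C, hc, fun x => hcC x⟩, fun x => ?_⟩
  · simp only [σ, prod_apply_add_single_of_periodic (f := fun j => deriv (u j)) (hper i)]
  · simp only [σ, hU]
    exact sum_fderiv_abs_prod_inv_mul_apply_single (fun i => (hu' i).continuous) hne x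
end

section
/- Let u : ℝ^d → ℝ be C², let Ω ⊆ ℝ^d be open and bounded, and suppose σ ∈ C¹(Ω) is positive with div(σ∇u) = 0 in Ω, and σ, σ⁻¹ ∈ L^∞(Ω). If x ∈ Ω is such that the gradient flow X(t,x) stays in Ω for all t ≥ 0, then the function t ↦ ∫₀ᵗ Δu(X(s,x)) ds is bounded on [0,∞), with bound ln(‖σ‖_∞ ‖σ⁻¹‖_∞) independent of x and t. -/
/-- Partial derivative in direction `i`. -/
noncomputable def pd {d : ℕ} (i : Fin d) (f : EuclideanSpace ℝ (Fin d) → ℝ)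
    (x : EuclideanSpace ℝ (Fin d)) : ℝ := fderiv ℝ f x (EuclideanSpace.single i 1)

/-- Laplacian. -/
noncomputable def lap {d : ℕ} (f : EuclideanSpace ℝ (Fin d) → ℝ)
    (x : EuclideanSpace ℝ (Fin d)) : ℝ := ∑ i, pd i (pd i f) x

/-!
Along the gradient flow, `d/ds log σ(X s) = ∇σ · ∇u / σ = -Δu`, the last equality being
`div(σ∇u) = σ Δu + ∇σ · ∇u = 0`. Hence `∫₀ᵗ Δu(X s) ds = log σ(X 0) - log σ(X t)`, and the two-sided
bounds on `σ` bound this difference of logarithms by `log (M M')`.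
-/

open Real Set

variable {d : ℕ}

theorem ContDiff.pd {n : WithTop ℕ∞} {f : EuclideanSpace ℝ (Fin d) → ℝ}
    (hf : ContDiff ℝ (n + 1) f) (i : Fin d) : ContDiff ℝ n (pd i f) :=
  (hf.fderiv_right le_rfl).clm_apply contDiff_const

theorem continuous_lap {f : EuclideanSpace ℝ (Fin d) → ℝ} (hf : ContDiff ℝ 2 f) :
    Continuous (lap f) :=
  continuous_finsetSum _ fun i _ =>
    (((hf.of_le (by norm_num) : ContDiff ℝ (0 + 1 + 1) f).pd i).pd i).continuous

theorem gradient_apply_eq_pd (f : EuclideanSpace ℝ (Fin d) → ℝ) (p : EuclideanSpace ℝ (Fin d))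
    (i : Fin d) : gradient f p i = pd i f p := by
  rw [pd, ← InnerProductSpace.toDual_symm_apply, EuclideanSpace.inner_single_right]
  simp [gradient]

theorem ContinuousLinearMap.apply_eq_sum_mul_apply_single
    (L : EuclideanSpace ℝ (Fin d) →L[ℝ] ℝ) (v : EuclideanSpace ℝ (Fin d)) :
    L v = ∑ i, v i * L (EuclideanSpace.single i 1) := by
  conv_lhs => rw [← (EuclideanSpace.basisFun (Fin d) ℝ).sum_repr v]
  simp only [map_sum, map_smul, EuclideanSpace.basisFun_repr, EuclideanSpace.basisFun_apply,
    smul_eq_mul]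

theorem fderiv_apply_gradient (f g : EuclideanSpace ℝ (Fin d) → ℝ) (p : EuclideanSpace ℝ (Fin d)) :
    fderiv ℝ f p (gradient g p) = ∑ i, pd i g p * pd i f p := by
  rw [(fderiv ℝ f p).apply_eq_sum_mul_apply_single]
  simp only [gradient_apply_eq_pd, pd]

theorem sum_fderiv_mul_pd_eq {σ u : EuclideanSpace ℝ (Fin d) → ℝ} {p : EuclideanSpace ℝ (Fin d)}
    (hσ : DifferentiableAt ℝ σ p) (hu : ∀ i, DifferentiableAt ℝ (pd i u) p) :
    ∑ i, fderiv ℝ (fun y => σ y * pd i u y) p (EuclideanSpace.single i 1) =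
      σ p * lap u p + fderiv ℝ σ p (gradient u p) := by
  simp only [fderiv_fun_mul hσ (hu _), fderiv_apply_gradient, lap, Finset.mul_sum,
    ← Finset.sum_add_distrib]
  refine Finset.sum_congr rfl fun i _ => ?_
  simp [pd]

theorem hasDerivAt_log_comp_gradient_flow {u σ : EuclideanSpace ℝ (Fin d) → ℝ}
    {X : ℝ → EuclideanSpace ℝ (Fin d)} {s : ℝ} (hu : ContDiff ℝ 2 u)
    (hσ : DifferentiableAt ℝ σ (X s)) (hpos : 0 < σ (X s))
    (hdiv : ∑ i, fderiv ℝ (fun y => σ y * pd i u y) (X s) (EuclideanSpace.single i 1) = 0)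
    (hX : HasDerivAt X (gradient u (X s)) s) :
    HasDerivAt (fun r => log (σ (X r))) (-lap u (X s)) s := by
  have hflux : fderiv ℝ σ (X s) (gradient u (X s)) = -(σ (X s) * lap u (X s)) := by
    rw [sum_fderiv_mul_pd_eq hσ fun i =>
      ((hu.of_le (by norm_num) : ContDiff ℝ (1 + 1) u).pd i).differentiable one_ne_zero _] at hdiv
    linarith
  refine ((hσ.hasFDerivAt.comp_hasDerivAt s hX).log hpos.ne').congr_deriv ?_
  rw [Function.comp_apply, hflux]
  field_simp

theorem integral_lap_comp_gradient_flow {u σ : EuclideanSpace ℝ (Fin d) → ℝ}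
    {Ω : Set (EuclideanSpace ℝ (Fin d))} {X : ℝ → EuclideanSpace ℝ (Fin d)} {t : ℝ}
    (hu : ContDiff ℝ 2 u) (hσ : ∀ p ∈ Ω, DifferentiableAt ℝ σ p) (hpos : ∀ p ∈ Ω, 0 < σ p)
    (hdiv : ∀ p ∈ Ω, ∑ i, fderiv ℝ (fun y => σ y * pd i u y) p (EuclideanSpace.single i 1) = 0)
    (hX : ∀ s, HasDerivAt X (gradient u (X s)) s) (hin : ∀ s ∈ uIcc 0 t, X s ∈ Ω) :
    ∫ s in (0:ℝ)..t, lap u (X s) = log (σ (X 0)) - log (σ (X t)) := by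
  have hXc : Continuous X := continuous_iff_continuousAt.2 fun s => (hX s).continuousAt
  have hderiv : ∀ s ∈ uIcc 0 t, HasDerivAt (fun r => -log (σ (X r))) (lap u (X s)) s :=
    fun s hs => by
      simpa only [neg_neg] using (hasDerivAt_log_comp_gradient_flow hu (hσ _ (hin s hs))
        (hpos _ (hin s hs)) (hdiv _ (hin s hs)) (hX s)).fun_neg
  rw [intervalIntegral.integral_eq_sub_of_hasDerivAt hderiv
    (((continuous_lap hu).comp hXc).intervalIntegrable 0 t)]
  ring

theorem log_sub_log_le_log_mul {a b M M' : ℝ} (ha : 0 < a) (hb : 0 < b) (haM : a ≤ M)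
    (hbM' : b⁻¹ ≤ M') : log a - log b ≤ log (M * M') := by
  rw [← log_div ha.ne' hb.ne', div_eq_mul_inv]
  exact log_le_log (by positivity) (mul_le_mul haM hbM' (by positivity) (ha.le.trans haM))

theorem stmt15_general {d : ℕ} (u σ : EuclideanSpace ℝ (Fin d) → ℝ)
    (Ω : Set (EuclideanSpace ℝ (Fin d))) (hΩ : IsOpen Ω)
    (hu : ContDiff ℝ 2 u) (hσ : ContDiffOn ℝ 1 σ Ω) (hpos : ∀ p ∈ Ω, 0 < σ p)
    (hdiv : ∀ p ∈ Ω, (∑ i, fderiv ℝ (fun y => σ y * pd i u y) p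
      (EuclideanSpace.single i 1)) = 0)
    (M M' : ℝ) (hM : ∀ p ∈ Ω, σ p ≤ M) (hM' : ∀ p ∈ Ω, (σ p)⁻¹ ≤ M')
    (X : ℝ → EuclideanSpace ℝ (Fin d))
    (hX : ∀ s, HasDerivAt X (gradient u (X s)) s)
    (hin : ∀ t ≥ (0:ℝ), X t ∈ Ω) :
    ∀ t ≥ (0:ℝ), |∫ s in (0:ℝ)..t, lap u (X s)| ≤ Real.log (M * M') := by
  intro t ht
  have hσd : ∀ p ∈ Ω, DifferentiableAt ℝ σ p := fun p hp =>
    (hσ.differentiableOn one_ne_zero p hp).differentiableAt (hΩ.mem_nhds hp)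
  have h0 : X 0 ∈ Ω := hin 0 le_rfl
  have ht' : X t ∈ Ω := hin t ht
  rw [integral_lap_comp_gradient_flow hu hσd hpos hdiv hX fun s hs => hin s
    (uIcc_of_le ht ▸ hs).1, abs_le]
  constructor
  · linarith [log_sub_log_le_log_mul (hpos _ ht') (hpos _ h0) (hM _ ht') (hM' _ h0)]
  · exact log_sub_log_le_log_mul (hpos _ h0) (hpos _ ht') (hM _ h0) (hM' _ ht')

/-- if σ > 0 is C¹ on an open bounded Ω with div(σ∇u) = 0 and σ ≤ M,
σ⁻¹ ≤ M' on Ω, and the forward trajectory of the gradient flow through x stays in Ω,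
then |∫₀ᵗ Δu(X(s)) ds| ≤ ln(M·M') for all t ≥ 0. -/
theorem stmt15 {d : ℕ} (u σ : EuclideanSpace ℝ (Fin d) → ℝ)
    (Ω : Set (EuclideanSpace ℝ (Fin d))) (hΩ : IsOpen Ω)
    (hΩb : Bornology.IsBounded Ω)
    (hu : ContDiff ℝ 2 u) (hσ : ContDiffOn ℝ 1 σ Ω) (hpos : ∀ p ∈ Ω, 0 < σ p)
    (hdiv : ∀ p ∈ Ω, (∑ i, fderiv ℝ (fun y => σ y * pd i u y) p
      (EuclideanSpace.single i 1)) = 0)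
    (M M' : ℝ) (hM : ∀ p ∈ Ω, σ p ≤ M) (hM' : ∀ p ∈ Ω, (σ p)⁻¹ ≤ M')
    (x : EuclideanSpace ℝ (Fin d)) (hx : x ∈ Ω)
    (X : ℝ → EuclideanSpace ℝ (Fin d)) (hX0 : X 0 = x)
    (hX : ∀ s, HasDerivAt X (gradient u (X s)) s)
    (hin : ∀ t ≥ (0:ℝ), X t ∈ Ω) :
    ∀ t ≥ (0:ℝ), |∫ s in (0:ℝ)..t, lap u (X s)| ≤ Real.log (M * M') :=
  stmt15_general u σ Ω hΩ hu hσ hpos hdiv M M' hM hM' X hX hin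
end

section
/- Let F : (0,1] → (−∞,β] be defined implicitly by x = exp(F(x) + ln²|F(x)|) with F(1) = β (β the unique negative solution of β + ln²|β| = 0 at x = 1). Then F is well defined, one-to-one, increasing, of class C², and satisfies: F(x) → −∞ as x → 0⁺, F'(x) → ∞ as x → 0⁺, lim_{x→0⁺} x F'(x) = 1, and lim_{x→0⁺} x² F''(x) = −1. -/
/-!
Write `g y = y + log² |y|`. On `y < 0`, `g' y = 1 + 2 log |y| / y > 0` (as `2 log t < t`), and
`g` runs from `-∞` to `+∞`, so it is an order isomorphism `(-∞, 0) ≃ ℝ` with smooth inverse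
`gInv`, and `F = gInv ∘ log`. For any `h`, `x (h ∘ log)' x = h' (log x)` and
`x² (h ∘ log)'' x = h'' (log x) - h' (log x)`, so the limits at `0⁺` reduce to
`gInv' = 1 / (g' ∘ gInv) → 1` and `gInv'' = -(g'' / g'³) ∘ gInv → 0` at `-∞`.
-/

open Real Filter Set Topology

section CompLog

variable {h : ℝ → ℝ} {x : ℝ}

lemma hasDerivAt_comp_log (hx : 0 < x) (hh : DifferentiableAt ℝ h (log x)) :
    HasDerivAt (h ∘ log) (deriv h (log x) / x) x := by
  simpa [div_eq_mul_inv] using hh.hasDerivAt.comp x (hasDerivAt_log hx.ne')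

lemma deriv_deriv_comp_log (hx : 0 < x) (hh : Differentiable ℝ h)
    (hh' : Differentiable ℝ (deriv h)) :
    deriv (deriv (h ∘ log)) x = (deriv (deriv h) (log x) - deriv h (log x)) / x ^ 2 := by
  have hderiv : deriv (h ∘ log) =ᶠ[𝓝 x] fun z => deriv h (log z) / z := by
    filter_upwards [Ioi_mem_nhds hx] with z hz
    exact (hasDerivAt_comp_log hz (hh _)).deriv
  rw [hderiv.deriv_eq]
  have := ((hh' _).hasDerivAt.comp x (hasDerivAt_log hx.ne')).div (hasDerivAt_id x) hx.ne'
  rw [show (fun z => deriv h (log z) / z) = deriv h ∘ log / id from rfl, this.deriv]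
  simp only [Function.comp_apply, id]
  field_simp

lemma tendsto_mul_deriv_comp_log {a : ℝ} (hh : Differentiable ℝ h)
    (ha : Tendsto (deriv h) atBot (𝓝 a)) :
    Tendsto (fun x => x * deriv (h ∘ log) x) (𝓝[>] 0) (𝓝 a) := by
  refine (ha.comp tendsto_log_nhdsGT_zero).congr' ?_
  filter_upwards [self_mem_nhdsWithin] with x (hx : 0 < x)
  rw [(hasDerivAt_comp_log hx (hh _)).deriv, Function.comp_apply, mul_div_cancel₀ _ hx.ne']

lemma tendsto_sq_mul_deriv_deriv_comp_log {a b : ℝ} (hh : Differentiable ℝ h)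
    (hh' : Differentiable ℝ (deriv h)) (ha : Tendsto (deriv h) atBot (𝓝 a))
    (hb : Tendsto (deriv (deriv h)) atBot (𝓝 b)) :
    Tendsto (fun x => x ^ 2 * deriv (deriv (h ∘ log)) x) (𝓝[>] 0) (𝓝 (b - a)) := by
  refine ((hb.sub ha).comp tendsto_log_nhdsGT_zero).congr' ?_
  filter_upwards [self_mem_nhdsWithin] with x (hx : 0 < x)
  rw [deriv_deriv_comp_log hx hh hh', mul_div_cancel₀ _ (pow_ne_zero 2 hx.ne')]
  rfl

end CompLog

lemma Real.two_mul_log_lt_self {t : ℝ} (ht : 0 < t) : 2 * log t < t := by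
  have hle : log (t / exp 1) ≤ t / exp 1 - 1 := log_le_sub_one_of_pos (by positivity)
  rw [log_div ht.ne' (exp_pos 1).ne', log_exp] at hle
  have h2t : 2 * (t / exp 1) < t := by
    rw [mul_div_assoc', div_lt_iff₀ (exp_pos 1)]
    nlinarith [exp_one_gt_two]
  linarith

namespace ImplicitLogSq

noncomputable section

-- `Real.log y = log |y|`, so on `y < 0` this is the paper's `y + ln² |y|`.
def g (y : ℝ) : ℝ := y + log y ^ 2

def g' (y : ℝ) : ℝ := 1 + 2 * log y / y

def g'' (y : ℝ) : ℝ := 2 * (1 - log y) / y ^ 2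

lemma g'_pos {y : ℝ} (hy : y < 0) : 0 < g' y := by
  have h := two_mul_log_lt_self (neg_pos.2 hy)
  rw [log_neg_eq_log] at h
  have : -1 < 2 * log y / y := by rw [lt_div_iff_of_neg hy]; linarith
  unfold g'; linarith

lemma hasDerivAt_g {y : ℝ} (hy : y ≠ 0) : HasDerivAt g (g' y) y := by
  refine ((hasDerivAt_id' y).add ((hasDerivAt_log hy).pow 2)).congr_deriv ?_
  simp only [g']
  field_simp
  ring

lemma hasDerivAt_g' {y : ℝ} (hy : y ≠ 0) : HasDerivAt g' (g'' y) y := by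
  refine ((((hasDerivAt_log hy).const_mul 2).div (hasDerivAt_id' y) hy).const_add 1).congr_deriv
    ?_
  simp only [g'']
  field_simp

lemma contDiffAt_g' {n : WithTop ℕ∞} {y : ℝ} (hy : y ≠ 0) : ContDiffAt ℝ n g' y :=
  contDiffAt_const.add ((contDiffAt_const.mul (contDiffAt_log.2 hy)).div contDiffAt_id hy)

lemma strictMonoOn_g : StrictMonoOn g (Iio 0) :=
  strictMonoOn_of_hasDerivWithinAt_pos (convex_Iio 0)
    (fun _ hy => (hasDerivAt_g (ne_of_lt hy)).continuousAt.continuousWithinAt)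
    (fun _ hy => (hasDerivAt_g (ne_of_lt (interior_subset (s := Iio 0) hy))).hasDerivWithinAt)
    (fun _ hy => g'_pos (interior_subset (s := Iio 0) hy))

lemma tendsto_log_pow_div_self_atBot (n : ℕ) :
    Tendsto (fun y => log y ^ n / y) atBot (𝓝 0) := by
  have h := (tendsto_pow_log_div_mul_add_atTop 1 0 n one_ne_zero).comp tendsto_neg_atBot_atTop
  simpa [Function.comp_def, log_neg_eq_log, div_neg] using h.neg

lemma tendsto_log_div_self_atBot : Tendsto (fun y => log y / y) atBot (𝓝 0) := by
  simpa using tendsto_log_pow_div_self_atBot 1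

lemma tendsto_g_atBot : Tendsto g atBot atBot := by
  have h : Tendsto (fun y => 1 + log y ^ 2 / y) atBot (𝓝 1) := by
    simpa using (tendsto_log_pow_div_self_atBot 2).const_add 1
  refine (tendsto_id.atBot_mul_pos one_pos h).congr' ?_
  filter_upwards [eventually_lt_atBot 0] with y hy
  rw [id, mul_add, mul_div_cancel₀ _ hy.ne, mul_one, g]

lemma tendsto_g_nhdsLT_zero : Tendsto g (𝓝[<] 0) atTop := by
  have hlog : Tendsto log (𝓝[<] 0) atBot :=
    tendsto_log_nhdsNE_zero.mono_left (nhdsWithin_mono 0 fun y hy => ne_of_lt hy)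
  exact (tendsto_id.mono_left nhdsWithin_le_nhds).add_atTop
    (by simpa [sq] using hlog.atBot_mul_atBot₀ hlog)

lemma tendsto_g'_atBot : Tendsto g' atBot (𝓝 1) := by
  have h := (tendsto_log_div_self_atBot.const_mul 2).const_add 1
  rw [mul_zero, add_zero] at h
  exact h.congr fun y => by rw [g', mul_div_assoc]

lemma tendsto_g''_atBot : Tendsto g'' atBot (𝓝 0) := by
  have hinv : Tendsto (fun y : ℝ => y⁻¹) atBot (𝓝 0) := tendsto_inv_atBot_zero
  have h := ((hinv.mul hinv).sub (tendsto_log_div_self_atBot.mul hinv)).const_mul 2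
  simp only [mul_zero, sub_zero] at h
  refine h.congr' ?_
  filter_upwards [eventually_lt_atBot 0] with y hy
  simp only [g'']
  field_simp

lemma surjOn_g : SurjOn g (Iio 0) univ :=
  ContinuousOn.surjOn_of_tendsto nonempty_Iio
    (fun y hy => (hasDerivAt_g (ne_of_lt hy)).continuousAt.continuousWithinAt)
    (tendsto_comp_val_Iio_atBot.2 tendsto_g_atBot)
    ((tendsto_comp_coe_Iio_atTop).2 tendsto_g_nhdsLT_zero)

def gIso : Iio (0 : ℝ) ≃o ℝ :=
  StrictMono.orderIsoOfSurjective (fun y => g y) (fun a b h => strictMonoOn_g a.2 b.2 h)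
    (surjOn_iff_surjective.1 surjOn_g)

def gInv (r : ℝ) : ℝ := gIso.symm r

lemma gInv_neg (r : ℝ) : gInv r < 0 := (gIso.symm r).2

lemma gIso_apply (y : Iio (0 : ℝ)) : gIso y = g y :=
  congrFun (StrictMono.coe_orderIsoOfSurjective _ _ _) y

lemma g_gInv (r : ℝ) : g (gInv r) = r := (gIso_apply _).symm.trans (gIso.apply_symm_apply r)

lemma gInv_g {y : ℝ} (hy : y < 0) : gInv (g y) = y :=
  congrArg Subtype.val (gIso.symm_apply_eq.2 (gIso_apply ⟨y, hy⟩).symm)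

lemma strictMono_gInv : StrictMono gInv := fun _ _ h => gIso.symm.strictMono h

lemma continuous_gInv : Continuous gInv := continuous_subtype_val.comp gIso.symm.continuous

lemma tendsto_gInv_atBot : Tendsto gInv atBot atBot :=
  tendsto_Iio_atBot.1 gIso.symm.tendsto_atBot

lemma hasDerivAt_gInv (r : ℝ) : HasDerivAt gInv (g' (gInv r))⁻¹ r :=
  (hasDerivAt_g (gInv_neg r).ne).of_local_left_inverse continuous_gInv.continuousAt
    (g'_pos (gInv_neg r)).ne' (.of_forall g_gInv)

lemma deriv_gInv : deriv gInv = fun r => (g' (gInv r))⁻¹ :=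
  funext fun r => (hasDerivAt_gInv r).deriv

lemma hasDerivAt_deriv_gInv (r : ℝ) :
    HasDerivAt (deriv gInv) (-(g'' (gInv r) / g' (gInv r) ^ 3)) r := by
  rw [deriv_gInv]
  refine (((hasDerivAt_g' (gInv_neg r).ne).comp r (hasDerivAt_gInv r)).inv
    (g'_pos (gInv_neg r)).ne').congr_deriv ?_
  simp only [Function.comp_apply]
  field_simp

lemma contDiff_gInv (n : ℕ) : ContDiff ℝ n gInv := by
  induction n with
  | zero => exact contDiff_zero.2 continuous_gInv
  | succ n ih =>
    refine (contDiff_succ_iff_deriv (n := n)).2 ⟨fun r => (hasDerivAt_gInv r).differentiableAt,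
      by simp, ?_⟩
    rw [deriv_gInv, contDiff_iff_contDiffAt]
    exact fun r => ((contDiffAt_g' (gInv_neg r).ne).comp r ih.contDiffAt).inv
      (g'_pos (gInv_neg r)).ne'

lemma tendsto_deriv_gInv_atBot : Tendsto (deriv gInv) atBot (𝓝 1) := by
  simpa [deriv_gInv] using (tendsto_g'_atBot.comp tendsto_gInv_atBot).inv₀ one_ne_zero

lemma tendsto_deriv_deriv_gInv_atBot : Tendsto (deriv (deriv gInv)) atBot (𝓝 0) := by
  have h := ((tendsto_g''_atBot.div (tendsto_g'_atBot.pow 3) (by norm_num)).neg).comp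
    tendsto_gInv_atBot
  simp only [zero_div, neg_zero] at h
  exact h.congr fun r => (hasDerivAt_deriv_gInv r).deriv.symm

lemma differentiable_gInv : Differentiable ℝ gInv :=
  fun r => (hasDerivAt_gInv r).differentiableAt

lemma differentiable_deriv_gInv : Differentiable ℝ (deriv gInv) :=
  fun r => (hasDerivAt_deriv_gInv r).differentiableAt

end

end ImplicitLogSq

open ImplicitLogSq

/-- the implicit relation x = exp(F(x) + ln²|F(x)|), F(1) = β (with β < 0 the
solution of β + ln²|β| = 0) defines a one-to-one, increasing, C² function F on (0,1] with
F(x) → −∞, F'(x) → ∞, xF'(x) → 1 and x²F''(x) → −1 as x → 0⁺. -/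
theorem stmt17 (β : ℝ) (hβneg : β < 0) (hβ : β + Real.log |β| ^ 2 = 0) :
    ∃ F : ℝ → ℝ,
      (∀ x ∈ Set.Ioc (0:ℝ) 1, F x ≤ β ∧ x = Real.exp (F x + Real.log |F x| ^ 2)) ∧
      F 1 = β ∧
      Set.InjOn F (Set.Ioc (0:ℝ) 1) ∧
      StrictMonoOn F (Set.Ioc (0:ℝ) 1) ∧
      ContDiffOn ℝ 2 F (Set.Ioc (0:ℝ) 1) ∧
      Filter.Tendsto F (nhdsWithin 0 (Set.Ioi 0)) Filter.atBot ∧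
      Filter.Tendsto (deriv F) (nhdsWithin 0 (Set.Ioi 0)) Filter.atTop ∧
      Filter.Tendsto (fun x => x * deriv F x) (nhdsWithin 0 (Set.Ioi 0)) (nhds 1) ∧
      Filter.Tendsto (fun x => x ^ 2 * deriv (deriv F) x) (nhdsWithin 0 (Set.Ioi 0))
        (nhds (-1)) := by
  rw [log_abs] at hβ
  have hF1 : (gInv ∘ log) 1 = β := by
    rw [Function.comp_apply, log_one, ← hβ]
    exact gInv_g hβneg
  have hmono : StrictMonoOn (gInv ∘ log) (Ioc 0 1) :=
    strictMono_gInv.comp_strictMonoOn (strictMonoOn_log.mono Ioc_subset_Ioi_self)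
  have hxF' := tendsto_mul_deriv_comp_log differentiable_gInv tendsto_deriv_gInv_atBot
  refine ⟨gInv ∘ log, fun x hx => ⟨?_, ?_⟩, hF1, hmono.injOn, hmono,
    (contDiff_gInv 2).comp_contDiffOn (contDiffOn_log.mono fun x hx => hx.1.ne'),
    tendsto_gInv_atBot.comp tendsto_log_nhdsGT_zero, ?_, hxF', ?_⟩
  · exact hF1 ▸ hmono.monotoneOn hx ⟨one_pos, le_rfl⟩ hx.2
  · rw [log_abs, Function.comp_apply, ← g, g_gInv, exp_log hx.1]
  · refine (hxF'.pos_mul_atTop one_pos tendsto_inv_nhdsGT_zero).congr' ?_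
    filter_upwards [self_mem_nhdsWithin] with x (hx : 0 < x)
    field_simp
  · simpa using tendsto_sq_mul_deriv_deriv_comp_log differentiable_gInv
      differentiable_deriv_gInv tendsto_deriv_gInv_atBot tendsto_deriv_deriv_gInv_atBot
end
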